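/- arXiv:1911.10889 — 4 statements merged into one kernel-verified Lean document; each statement's English description precedes it below -/
import Mathlib

section
/- If the truncated mean function ℓ(x) = ∫₀ˣ (1 - F(t)) dt of a nonnegative random variable X with distribution function F is slowly varying at infinity and E[X] = ∞, then x(1 - F(x)) = o(ℓ(x)) as x → ∞. -/
open MeasureTheory Filter Set Asymptotics Topology

/-- Tail of a distribution: `P[X > x]`. -/
noncomputable def tailF (μ : Measure ℝ) (x : ℝ) : ℝ := (μ (Set.Ioi x)).toReal

/-- Truncated mean `ℓ(x) = ∫₀ˣ (1 - F(t)) dt`. -/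
noncomputable def ell (μ : Measure ℝ) (x : ℝ) : ℝ := ∫ t in (0:ℝ)..x, tailF μ t

/-- A function is slowly varying at infinity. -/
def SlowlyVarying (f : ℝ → ℝ) : Prop :=
  (∀ᶠ x in atTop, 0 < f x) ∧
    ∀ c : ℝ, 1 < c → Tendsto (fun x => f (c * x) / f x) atTop (𝓝 1)

/-!
Since `1 - F` is nonincreasing, `(x/2)(1 - F(x)) ≤ ∫_{x/2}^x (1 - F) = ℓ(x) - ℓ(x/2)`, and slow
variation of `ℓ` says exactly that `ℓ(x) - ℓ(x/2) = o(ℓ(x))`.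
-/

lemma Antitone.sub_mul_le_intervalIntegral {f : ℝ → ℝ} (hf : Antitone f) {a b : ℝ}
    (hab : a ≤ b) : (b - a) * f b ≤ ∫ t in a..b, f t :=
  calc (b - a) * f b = ∫ _ in a..b, f b := by
        rw [intervalIntegral.integral_const, smul_eq_mul]
    _ ≤ ∫ t in a..b, f t :=
        intervalIntegral.integral_mono_on hab intervalIntegrable_const hf.intervalIntegrable
          fun _ ht => hf ht.2

namespace SlowlyVarying

variable {f : ℝ → ℝ}

lemma tendsto_div_comp_div (hf : SlowlyVarying f) {c : ℝ} (hc : 1 < c) :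
    Tendsto (fun x => f (x / c) / f x) atTop (𝓝 1) := by
  have hc0 : 0 < c := one_pos.trans hc
  have h := (hf.2 c hc).comp (tendsto_id.atTop_div_const hc0)
  simpa [Function.comp_def, mul_div_cancel₀ _ hc0.ne'] using h.inv₀ one_ne_zero

lemma isLittleO_sub_comp_div (hf : SlowlyVarying f) {c : ℝ} (hc : 1 < c) :
    (fun x => f x - f (x / c)) =o[atTop] f := by
  rw [isLittleO_iff_tendsto' (hf.1.mono fun _ hx h => absurd h hx.ne')]
  have h := (tendsto_const_nhds (x := (1 : ℝ))).sub (hf.tendsto_div_comp_div hc)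
  rw [sub_self] at h
  refine h.congr' (hf.1.mono fun x hx => ?_)
  dsimp only
  rw [sub_div, div_self hx.ne']

end SlowlyVarying

lemma tailF_antitone (μ : Measure ℝ) [IsFiniteMeasure μ] : Antitone (tailF μ) :=
  fun _ _ hab => ENNReal.toReal_mono (measure_ne_top μ _) (measure_mono (Ioi_subset_Ioi hab))

lemma mul_tailF_le_two_mul_ell_sub (μ : Measure ℝ) [IsFiniteMeasure μ] {x : ℝ} (hx : 0 ≤ x) :
    x * tailF μ x ≤ 2 * (ell μ x - ell μ (x / 2)) := by
  have hint : ∀ a b : ℝ, IntervalIntegrable (tailF μ) volume a b :=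
    fun _ _ => (tailF_antitone μ).intervalIntegrable
  have h := (tailF_antitone μ).sub_mul_le_intervalIntegral (a := x / 2) (b := x) (by linarith)
  rw [ell, ell, intervalIntegral.integral_interval_sub_left (hint 0 x) (hint 0 (x / 2))]
  linarith

theorem stmt0_general (μ : Measure ℝ) [IsProbabilityMeasure μ]
    (hsv : SlowlyVarying (ell μ)) :
    (fun x => x * tailF μ x) =o[atTop] ell μ := by
  refine IsBigO.trans_isLittleO ?_ (hsv.isLittleO_sub_comp_div one_lt_two)
  refine IsBigO.of_bound 2 (eventually_ge_atTop 0 |>.mono fun x hx => ?_)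
  have hbound := mul_tailF_le_two_mul_ell_sub μ hx
  have htail : 0 ≤ x * tailF μ x := mul_nonneg hx ENNReal.toReal_nonneg
  rwa [Real.norm_of_nonneg htail, Real.norm_of_nonneg (by linarith)]

/-- If `ℓ(x) = ∫₀ˣ (1-F(t)) dt` is slowly varying and `E X = ∞` for a nonnegative
variable, then `x (1 - F(x)) = o(ℓ(x))` as `x → ∞`. -/
theorem stmt0 (μ : Measure ℝ) [IsProbabilityMeasure μ]
    (hnn : μ (Set.Iio 0) = 0)
    (hmean : ∫⁻ x, ENNReal.ofReal |x| ∂μ = ⊤)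
    (hsv : SlowlyVarying (ell μ)) :
    (fun x => x * tailF μ x) =o[atTop] ell μ :=
  stmt0_general μ hsv
end

section
/- If the truncated mean ℓ(x) = ∫₀ˣ (1 - F(t)) dt of a nonnegative random variable is slowly varying at infinity and E[X] = ∞, then ∫₀ˣ t² dF(t) ≤ 2∫₀ˣ t(1 - F(t)) dt = o(x ℓ(x)) as x → ∞. -/
open MeasureTheory Filter Set Asymptotics Topology

lemma tailF_nonneg (μ : Measure ℝ) (x : ℝ) : 0 ≤ tailF μ x := ENNReal.toReal_nonneg

lemma tailF_anti (μ : Measure ℝ) [IsProbabilityMeasure μ] : Antitone (tailF μ) := by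
  intro a b hab
  exact ENNReal.toReal_mono (measure_ne_top μ _) (measure_mono (Ioi_subset_Ioi hab))

lemma tailF_le_one (μ : Measure ℝ) [IsProbabilityMeasure μ] (x : ℝ) : tailF μ x ≤ 1 := by
  have := prob_le_one (μ := μ) (s := Set.Ioi x)
  simpa [tailF] using ENNReal.toReal_mono (by simp) this

lemma tailF_intble (μ : Measure ℝ) [IsProbabilityMeasure μ] (a b : ℝ) :
    IntervalIntegrable (tailF μ) volume a b := (tailF_anti μ).intervalIntegrable

lemma mul_tailF_intble (μ : Measure ℝ) [IsProbabilityMeasure μ] (a b : ℝ) :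
    IntervalIntegrable (fun t => t * tailF μ t) volume a b :=
  (tailF_intble μ a b).continuousOn_mul continuousOn_id

lemma ell_sub (μ : Measure ℝ) [IsProbabilityMeasure μ] (a b : ℝ) :
    ell μ b - ell μ a = ∫ t in a..b, tailF μ t :=
  intervalIntegral.integral_interval_sub_left (tailF_intble μ 0 b) (tailF_intble μ 0 a)

lemma ell_mono (μ : Measure ℝ) [IsProbabilityMeasure μ] {a b : ℝ} (hab : a ≤ b) :
    ell μ a ≤ ell μ b := by
  have h := ell_sub μ a b
  have h2 : 0 ≤ ∫ t in a..b, tailF μ t :=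
    intervalIntegral.integral_nonneg hab (fun t _ => tailF_nonneg μ t)
  linarith

lemma g_nonneg (μ : Measure ℝ) [IsProbabilityMeasure μ] {x : ℝ} (hx : 0 ≤ x) :
    0 ≤ ∫ t in (0:ℝ)..x, t * tailF μ t :=
  intervalIntegral.integral_nonneg hx (fun t ht => mul_nonneg ht.1 (tailF_nonneg μ t))

lemma claimA (μ : Measure ℝ) [IsProbabilityMeasure μ] {y x : ℝ} (hy : 0 ≤ y) (hyx : y ≤ x) :
    (∫ t in (0:ℝ)..x, t * tailF μ t) ≤ y * ell μ y + x * (ell μ x - ell μ y) := by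
  have hx : 0 ≤ x := hy.trans hyx
  have hsplit : (∫ t in (0:ℝ)..x, t * tailF μ t)
      = (∫ t in (0:ℝ)..y, t * tailF μ t) + ∫ t in y..x, t * tailF μ t :=
    (intervalIntegral.integral_add_adjacent_intervals (mul_tailF_intble μ 0 y)
      (mul_tailF_intble μ y x)).symm
  have h1 : (∫ t in (0:ℝ)..y, t * tailF μ t) ≤ y * ell μ y := by
    have : (∫ t in (0:ℝ)..y, t * tailF μ t) ≤ ∫ t in (0:ℝ)..y, y * tailF μ t := by
      apply intervalIntegral.integral_mono_on hy (mul_tailF_intble μ 0 y)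
        ((tailF_intble μ 0 y).const_mul y)
      exact fun t ht => mul_le_mul_of_nonneg_right ht.2 (tailF_nonneg μ t)
    simpa [intervalIntegral.integral_const_mul, ell] using this
  have h2 : (∫ t in y..x, t * tailF μ t) ≤ x * (ell μ x - ell μ y) := by
    have : (∫ t in y..x, t * tailF μ t) ≤ ∫ t in y..x, x * tailF μ t := by
      apply intervalIntegral.integral_mono_on hyx (mul_tailF_intble μ y x)
        ((tailF_intble μ y x).const_mul x)
      exact fun t ht => mul_le_mul_of_nonneg_right ht.2 (tailF_nonneg μ t)
    rw [ell_sub μ y x]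
    simpa [intervalIntegral.integral_const_mul] using this
  linarith

lemma partB (μ : Measure ℝ) [IsProbabilityMeasure μ] (hsv : SlowlyVarying (ell μ)) :
    (fun x => ∫ t in (0:ℝ)..x, t * tailF μ t) =o[atTop] (fun x => x * ell μ x) := by
  have hpos := hsv.1
  have hne : ∀ᶠ x in atTop, x * ell μ x ≠ 0 := by
    filter_upwards [hpos, eventually_gt_atTop (0:ℝ)] with x h1 h2
    positivity
  rw [isLittleO_iff_tendsto' (by filter_upwards [hne] with x h h0 using absurd h0 h)]
  rw [NormedAddCommGroup.tendsto_nhds_zero]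
  intro ε hε
  set δ : ℝ := min (ε/4) (1/2) with hδdef
  have hδ0 : 0 < δ := lt_min (by linarith) (by norm_num)
  have hδ1 : δ < 1 := lt_of_le_of_lt (min_le_right _ _) (by norm_num)
  have h2δ : 2 * δ < ε := by
    have : δ ≤ ε/4 := min_le_left _ _
    linarith
  have hcomp : Tendsto (fun x : ℝ => δ * x) atTop atTop :=
    Tendsto.const_mul_atTop hδ0 tendsto_id
  have key : Tendsto (fun x => ell μ (δ * x) / ell μ x) atTop (𝓝 1) := by
    have hc : 1 < δ⁻¹ := (one_lt_inv₀ hδ0).2 hδ1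
    have h2 := (hsv.2 δ⁻¹ hc).comp hcomp
    have h3 : ((fun x => ell μ (δ⁻¹ * x) / ell μ x) ∘ fun x => δ * x)
        = fun x => ell μ x / ell μ (δ * x) := by
      funext x
      simp [Function.comp, inv_mul_cancel_left₀ hδ0.ne']
    rw [h3] at h2
    have h5 := h2.inv₀ one_ne_zero
    simpa [inv_div] using h5
  have hev1 : ∀ᶠ x in atTop, (1 - δ) * ell μ x < ell μ (δ * x) := by
    filter_upwards [key.eventually (eventually_gt_nhds (show (1:ℝ) - δ < 1 by linarith)),
      hpos] with x h1 h2
    exact (lt_div_iff₀ h2).mp h1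
  filter_upwards [hev1, hpos, eventually_gt_atTop (0:ℝ)] with x h1 hℓ hx
  have hyx : δ * x ≤ x := by nlinarith
  have hy0 : 0 ≤ δ * x := by positivity
  have hA := claimA μ hy0 hyx
  have hmono : ell μ (δ * x) ≤ ell μ x := ell_mono μ hyx
  have hg0 : 0 ≤ ∫ t in (0:ℝ)..x, t * tailF μ t := g_nonneg μ hx.le
  have hbound : (∫ t in (0:ℝ)..x, t * tailF μ t) ≤ 2 * δ * (x * ell μ x) := by nlinarith
  have hden : 0 < x * ell μ x := by positivity
  rw [Real.norm_eq_abs, abs_of_nonneg (div_nonneg hg0 hden.le), div_lt_iff₀ hden]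
  nlinarith

lemma measurable_tailF (μ : Measure ℝ) [IsProbabilityMeasure μ] : Measurable (tailF μ) :=
  (tailF_anti μ).measurable

lemma partA (μ : Measure ℝ) [IsProbabilityMeasure μ] {x : ℝ} (hx : 0 ≤ x) :
    (∫ t in Set.Icc 0 x, t ^ 2 ∂μ) ≤ 2 * ∫ t in (0:ℝ)..x, t * tailF μ t := by
  set ν := μ.restrict (Set.Icc 0 x) with hν
  have f_nn : 0 ≤ᵐ[ν] (id : ℝ → ℝ) :=
    (ae_restrict_iff' measurableSet_Icc).2 (.of_forall fun a ha => ha.1)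
  have g_intble : ∀ t > (0:ℝ), IntervalIntegrable (fun s => 2 * s) volume 0 t :=
    fun t _ => (continuous_const.mul continuous_id).intervalIntegrable 0 t
  have g_nn : ∀ᵐ t ∂(volume.restrict (Set.Ioi (0:ℝ))), 0 ≤ 2 * t :=
    (ae_restrict_iff' measurableSet_Ioi).2 (.of_forall fun t ht => by
      have : (0:ℝ) < t := ht; linarith)
  have hkey := lintegral_comp_eq_lintegral_meas_lt_mul ν f_nn aemeasurable_id g_intble g_nn
  -- simplify the inner interval integral to ω ^ 2
  have hinner : ∀ ω : ℝ, (∫ t in (0:ℝ)..(id ω), 2 * t) = ω ^ 2 := by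
    intro ω
    rw [intervalIntegral.integral_const_mul, integral_id]
    simp
    ring
  simp_rw [hinner] at hkey
  simp only [id_eq] at hkey
  set A := ∫⁻ ω, ENNReal.ofReal (ω ^ 2) ∂ν with hA
  set B := ∫⁻ t in Set.Ioc (0:ℝ) x, ENNReal.ofReal (t * tailF μ t) with hB
  -- the RHS of hkey splits and is bounded
  have hsetν : ∀ t : ℝ, ν {a | t < a} = μ ({a | t < a} ∩ Set.Icc 0 x) :=
    fun t => Measure.restrict_apply measurableSet_Ioi
  have hsplit : (∫⁻ t in Set.Ioi (0:ℝ), ν {a | t < a} * ENNReal.ofReal (2 * t))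
      = (∫⁻ t in Set.Ioc (0:ℝ) x, ν {a | t < a} * ENNReal.ofReal (2 * t))
        + ∫⁻ t in Set.Ioi x, ν {a | t < a} * ENNReal.ofReal (2 * t) := by
    rw [← lintegral_union measurableSet_Ioi (Set.Ioc_disjoint_Ioi le_rfl),
      Set.Ioc_union_Ioi_eq_Ioi hx]
  have hzero : (∫⁻ t in Set.Ioi x, ν {a | t < a} * ENNReal.ofReal (2 * t)) = 0 := by
    rw [setLIntegral_congr_fun measurableSet_Ioi (g := fun _ => 0) ?_,
      lintegral_zero]
    intro t ht
    have : ({a : ℝ | t < a} ∩ Set.Icc 0 x) = ∅ := by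
      ext a
      simp only [Set.mem_inter_iff, Set.mem_setOf_eq, Set.mem_Icc, Set.mem_empty_iff_false,
        iff_false, not_and]
      intro h1 h2
      have : x < a := lt_trans ht h1
      linarith
    beta_reduce
    rw [hsetν t, this]
    simp
  have hmono2 : (∫⁻ t in Set.Ioc (0:ℝ) x, ν {a | t < a} * ENNReal.ofReal (2 * t))
      ≤ ∫⁻ t in Set.Ioc (0:ℝ) x, μ (Set.Ioi t) * ENNReal.ofReal (2 * t) := by
    apply lintegral_mono
    intro t
    apply mul_le_mul_left
    rw [hsetν t]
    exact measure_mono Set.inter_subset_left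
  have hB2 : (∫⁻ t in Set.Ioc (0:ℝ) x, μ (Set.Ioi t) * ENNReal.ofReal (2 * t)) = 2 * B := by
    rw [hB, ← lintegral_const_mul' _ _ (by norm_num : (2:ENNReal) ≠ ⊤)]
    apply setLIntegral_congr_fun measurableSet_Ioc ?_
    intro t ht
    have ht0 : 0 ≤ t := ht.1.le
    beta_reduce
    rw [ENNReal.ofReal_mul ht0, tailF, ENNReal.ofReal_toReal (measure_ne_top μ _),
      ENNReal.ofReal_mul (by norm_num : (0:ℝ) ≤ 2)]
    rw [(by simp : ENNReal.ofReal (2:ℝ) = 2)]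
    ring
  have hAle : A ≤ 2 * B := by
    rw [hkey, hsplit, hzero, add_zero, ← hB2]
    exact hmono2
  -- finiteness of B
  have hBfin : B ≠ ⊤ := by
    have hle : B ≤ ∫⁻ _ in Set.Ioc (0:ℝ) x, ENNReal.ofReal x := by
      apply setLIntegral_mono' measurableSet_Ioc
      intro t ht
      apply ENNReal.ofReal_le_ofReal
      calc t * tailF μ t ≤ t * 1 := by
            exact mul_le_mul_of_nonneg_left (tailF_le_one μ t) ht.1.le
        _ ≤ x := by rw [mul_one]; exact ht.2
    have : (∫⁻ _ in Set.Ioc (0:ℝ) x, ENNReal.ofReal x) < ⊤ := by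
      rw [lintegral_const]
      exact ENNReal.mul_lt_top ENNReal.ofReal_lt_top (by
        simp [Real.volume_Ioc])
    exact (lt_of_le_of_lt hle this).ne
  -- identify both sides with toReal of A, B
  have hL : (∫ t, t ^ 2 ∂ν) = A.toReal := by
    rw [hA, integral_eq_lintegral_of_nonneg_ae (.of_forall fun t => sq_nonneg t)
      ((measurable_id.pow_const 2).aestronglyMeasurable)]
  have hR : (∫ t in (0:ℝ)..x, t * tailF μ t) = B.toReal := by
    rw [intervalIntegral.integral_of_le hx, hB,
      integral_eq_lintegral_of_nonneg_ae
        ((ae_restrict_iff' measurableSet_Ioc).2 (.of_forall fun t ht =>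
          mul_nonneg ht.1.le (tailF_nonneg μ t)))
        ((measurable_id.mul (measurable_tailF μ)).aestronglyMeasurable)]
  rw [hL, hR]
  calc A.toReal ≤ (2 * B).toReal :=
        ENNReal.toReal_mono (ENNReal.mul_ne_top (by norm_num) hBfin) hAle
    _ = 2 * B.toReal := by rw [ENNReal.toReal_mul]; simp

/-- `∫₀ˣ t² dF(t) ≤ 2 ∫₀ˣ t(1-F(t)) dt = o(x ℓ(x))` as `x → ∞`. -/
theorem stmt2 (μ : Measure ℝ) [IsProbabilityMeasure μ]
    (hnn : μ (Set.Iio 0) = 0)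
    (hmean : ∫⁻ x, ENNReal.ofReal |x| ∂μ = ⊤)
    (hsv : SlowlyVarying (ell μ)) :
    (∀ x : ℝ, 0 ≤ x →
      (∫ t in Set.Icc 0 x, t ^ 2 ∂μ) ≤ 2 * ∫ t in (0:ℝ)..x, t * tailF μ t) ∧
    (fun x => ∫ t in (0:ℝ)..x, t * tailF μ t) =o[atTop] (fun x => x * ell μ x) := by
  exact ⟨fun x hx => partA μ hx, partB μ hsv⟩
end

section
/- If X is a nonnegative random variable with E[X] = ∞ whose truncated mean ℓ(x) = ∫₀ˣ (1 - F(t)) dt is slowly varying at infinity, then the characteristic function φ(θ) = E[e^{iθX}] satisfies 1 - φ(θ) = -iθ ℓ(1/|θ|)(1 + o(1)) as θ → 0; in particular Re[1 - φ(θ)] = o(θ ℓ(1/θ)) and Im[1 - φ(θ)] ∼ -θ ℓ(1/θ) as θ → 0+. -/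
open MeasureTheory Filter Set Asymptotics Topology

/-- Characteristic function `φ(θ) = E[e^{iθX}]`. -/
noncomputable def charF (μ : Measure ℝ) (θ : ℝ) : ℂ :=
  ∫ x, Complex.exp (Complex.I * θ * x) ∂μ

section StmtAux

set_option linter.unusedSectionVars false
set_option linter.unnecessarySimpa false

variable (μ : Measure ℝ) [IsProbabilityMeasure μ]

lemma aux_tailF_nonneg (x : ℝ) : 0 ≤ tailF μ x := ENNReal.toReal_nonneg

lemma aux_tailF_le_one (x : ℝ) : tailF μ x ≤ 1 := by
  have := prob_le_one (μ := μ) (s := Set.Ioi x)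
  simpa [tailF] using ENNReal.toReal_le_of_le_ofReal zero_le_one (by simpa using this)

lemma aux_tailF_anti : Antitone (tailF μ) := by
  intro a b hab
  exact ENNReal.toReal_mono (measure_ne_top μ _) (measure_mono (Set.Ioi_subset_Ioi hab))

lemma aux_tailF_meas : Measurable (tailF μ) := (aux_tailF_anti μ).measurable

lemma aux_tailF_ii (a b : ℝ) : IntervalIntegrable (tailF μ) volume a b := by
  constructor <;>
  · refine Integrable.mono' (integrable_const 1) (aux_tailF_meas μ).aestronglyMeasurable.restrict ?_
    filter_upwards with x
    rw [Real.norm_eq_abs, abs_of_nonneg (aux_tailF_nonneg μ x)]; exact aux_tailF_le_one μ x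

lemma aux_ell_sub (x y : ℝ) : ell μ y - ell μ x = ∫ t in x..y, tailF μ t := by
  have := intervalIntegral.integral_add_adjacent_intervals (a := (0:ℝ)) (b := x) (c := y)
    (aux_tailF_ii μ 0 x) (aux_tailF_ii μ x y)
  simp only [ell]; linarith

lemma aux_ell_mono : Monotone (ell μ) := by
  intro a b hab
  have h := aux_ell_sub μ a b
  have : 0 ≤ ∫ t in a..b, tailF μ t :=
    intervalIntegral.integral_nonneg hab (fun t _ => aux_tailF_nonneg μ t)
  linarith

lemma aux_ell_sub_ge (x y : ℝ) (hxy : x ≤ y) : (y - x) * tailF μ y ≤ ell μ y - ell μ x := by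
  rw [aux_ell_sub μ x y]
  have : ∫ t in x..y, tailF μ y ≤ ∫ t in x..y, tailF μ t := by
    apply intervalIntegral.integral_mono_on hxy (intervalIntegrable_const) (aux_tailF_ii μ x y)
    intro t ht; exact aux_tailF_anti μ ht.2
  simpa using this

lemma aux_meas_Ioi_meas : Measurable (fun t => μ (Set.Ioi t)) := by
  have : Antitone (fun t => μ (Set.Ioi t)) := fun a b hab => measure_mono (Set.Ioi_subset_Ioi hab)
  exact this.measurable

lemma aux_lint_top (hnn : μ (Set.Iio 0) = 0)
    (hmean : ∫⁻ x, ENNReal.ofReal |x| ∂μ = ⊤) :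
    ∫⁻ t in Set.Ioi (0:ℝ), μ (Set.Ioi t) = ⊤ := by
  rw [lintegral_eq_lintegral_meas_lt μ (Filter.Eventually.of_forall fun x => abs_nonneg x)
    (measurable_abs.aemeasurable)] at hmean
  rw [eq_top_iff, ← hmean]
  refine setLIntegral_mono (aux_meas_Ioi_meas μ) (fun t ht => ?_)
  have hsub : {a : ℝ | t < |a|} ⊆ Set.Ioi t ∪ Set.Iio 0 := by
    intro a ha
    simp only [Set.mem_setOf_eq] at ha
    rcases abs_cases a with ⟨h1, _⟩ | ⟨h1, h2⟩
    · left; simpa [h1] using ha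
    · right; simp only [Set.mem_Iio]; linarith [Set.mem_Ioi.mp ht]
  calc μ {a : ℝ | t < |a|} ≤ μ (Set.Ioi t ∪ Set.Iio 0) := measure_mono hsub
    _ ≤ μ (Set.Ioi t) + μ (Set.Iio 0) := measure_union_le _ _
    _ = μ (Set.Ioi t) := by rw [hnn, add_zero]

lemma aux_ell_atTop (hnn : μ (Set.Iio 0) = 0)
    (hmean : ∫⁻ x, ENNReal.ofReal |x| ∂μ = ⊤) :
    Tendsto (ell μ) atTop atTop := by
  have key := aux_lint_top μ hnn hmean
  have hmono := aux_ell_mono μ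
  set ν : Measure ℝ := volume.withDensity (fun t => μ (Set.Ioi t)) with hν
  have hU : (⋃ n : ℕ, Set.Ioc (0:ℝ) n) = Set.Ioi 0 := by
    ext x; simp only [Set.mem_iUnion, Set.mem_Ioc, Set.mem_Ioi]
    constructor
    · rintro ⟨n, h1, _⟩; exact h1
    · intro hx; obtain ⟨n, hn⟩ := exists_nat_ge x; exact ⟨n, hx, hn⟩
  have hνIoc : ∀ n : ℕ, ν (Set.Ioc (0:ℝ) n) = ∫⁻ t in Set.Ioc (0:ℝ) n, μ (Set.Ioi t) :=
    fun n => withDensity_apply _ measurableSet_Ioc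
  have hfin : ∀ n : ℕ, ν (Set.Ioc (0:ℝ) n) ≠ ⊤ := by
    intro n
    rw [hνIoc n]
    have : ∫⁻ t in Set.Ioc (0:ℝ) n, μ (Set.Ioi t) ≤ ∫⁻ _ in Set.Ioc (0:ℝ) n, 1 :=
      setLIntegral_mono measurable_const (fun t _ => prob_le_one)
    refine ne_of_lt (lt_of_le_of_lt this ?_)
    simpa [Real.volume_Ioc] using ENNReal.ofReal_lt_top
  have htd : Tendsto (fun n : ℕ => ν (Set.Ioc (0:ℝ) n)) atTop (𝓝 ⊤) := by
    have := tendsto_measure_iUnion_atTop (μ := ν) (s := fun n : ℕ => Set.Ioc (0:ℝ) n)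
      (fun a b hab => Set.Ioc_subset_Ioc le_rfl (by exact_mod_cast hab))
    rw [hU] at this
    have hν0 : ν (Set.Ioi (0:ℝ)) = ⊤ := by rw [hν, withDensity_apply _ measurableSet_Ioi]; exact key
    rw [hν0] at this; exact this
  have hell : ∀ n : ℕ, ell μ n = (ν (Set.Ioc (0:ℝ) n)).toReal := by
    intro n
    rw [ell, intervalIntegral.integral_of_le (by positivity : (0:ℝ) ≤ (n:ℝ)), hνIoc]
    rw [← integral_toReal (aux_meas_Ioi_meas μ).aemeasurable
      (Filter.Eventually.of_forall fun t => measure_lt_top μ _)]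
    rfl
  have hnat : Tendsto (fun n : ℕ => ell μ n) atTop atTop := by
    rw [tendsto_atTop]
    intro M
    obtain ⟨m, hm⟩ := exists_nat_ge M
    filter_upwards [ENNReal.tendsto_nhds_top_iff_nat.mp htd m] with n hn
    rw [hell n]
    refine le_trans hm ?_
    have := ENNReal.toReal_mono (hfin n) hn.le
    simpa using this
  rw [tendsto_atTop]
  intro M
  obtain ⟨n, hn⟩ := (tendsto_atTop.mp hnat M).exists
  filter_upwards [eventually_ge_atTop (n:ℝ)] with x hx
  exact le_trans hn (hmono hx)

lemma aux_key1 (hsv : SlowlyVarying (ell μ)) :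
    Tendsto (fun x => x * tailF μ x / ell μ x) atTop (𝓝 0) := by
  have hnn := aux_tailF_nonneg μ
  have hge := aux_ell_sub_ge μ
  have h2 : Tendsto (fun x => ell μ (2 * x) / ell μ x) atTop (𝓝 1) := hsv.2 2 one_lt_two
  have hhalf : Tendsto (fun x : ℝ => x / 2) atTop atTop := tendsto_id.atTop_div_const two_pos
  have h3 : Tendsto (fun x => ell μ x / ell μ (x / 2)) atTop (𝓝 1) := by
    have := h2.comp hhalf
    convert this using 2 with x
    simp [Function.comp, mul_div_cancel₀]
  have h4 : Tendsto (fun x => ell μ (x / 2) / ell μ x) atTop (𝓝 1) := by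
    have := (h3.inv₀ one_ne_zero)
    simpa [inv_div] using this
  have h5 : Tendsto (fun x => 2 * (1 - ell μ (x / 2) / ell μ x)) atTop (𝓝 0) := by
    have := (tendsto_const_nhds (x := (1:ℝ)) (f := atTop)).sub h4
    have := this.const_mul 2
    simpa using this
  refine squeeze_zero' ?_ ?_ h5
  · filter_upwards [hsv.1, eventually_ge_atTop (0:ℝ)] with x hx hx0
    exact div_nonneg (mul_nonneg hx0 (hnn x)) hx.le
  · filter_upwards [hsv.1, eventually_ge_atTop (0:ℝ)] with x hx hx0
    have hkey : (x / 2) * tailF μ x ≤ ell μ x - ell μ (x / 2) := by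
      have := hge (x / 2) x (by linarith)
      convert this using 2
      ring
    rw [div_le_iff₀ hx]
    calc x * tailF μ x ≤ 2 * (ell μ x - ell μ (x / 2)) := by linarith
      _ = 2 * (1 - ell μ (x / 2) / ell μ x) * ell μ x := by field_simp

lemma aux_tG_ii (a b : ℝ) : IntervalIntegrable (fun t => t * tailF μ t) volume a b := by
  constructor <;>
  · refine Integrable.mono' (g := fun t => |a| + |b|) (integrable_const _)
      ((measurable_id.mul (aux_tailF_meas μ)).aestronglyMeasurable.restrict) ?_
    rw [ae_restrict_iff' measurableSet_Ioc]
    filter_upwards with t ht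
    rw [Real.norm_eq_abs, abs_mul]
    have h2 : |tailF μ t| ≤ 1 := by
      rw [abs_of_nonneg (aux_tailF_nonneg μ t)]; exact aux_tailF_le_one μ t
    have h3 : |t| ≤ |a| + |b| := by
      rw [abs_le]
      constructor <;>
        nlinarith [neg_abs_le a, neg_abs_le b, le_abs_self a, le_abs_self b, ht.1.le, ht.2]
    calc |t| * |tailF μ t| ≤ |t| * 1 := by
          exact mul_le_mul_of_nonneg_left h2 (abs_nonneg t)
      _ ≤ |a| + |b| := by simpa using h3

lemma aux_key2 (hsv : SlowlyVarying (ell μ))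
    (helltop : Tendsto (ell μ) atTop atTop) :
    Tendsto (fun x => (∫ t in (0:ℝ)..x, t * tailF μ t) / (x * ell μ x)) atTop (𝓝 0) := by
  have h0 := aux_tailF_nonneg μ
  have h1 := aux_tailF_le_one μ
  have hellpos := hsv.1
  have hellmono := aux_ell_mono μ
  have key1 := aux_key1 μ hsv
  have hii := aux_tG_ii μ
  have hellii : ∀ a b : ℝ, IntervalIntegrable (ell μ) volume a b :=
    fun a b => (hellmono.monotoneOn _).intervalIntegrable
  rw [Metric.tendsto_nhds]
  intro ε hε
  have hev : ∀ᶠ t in atTop, t * tailF μ t ≤ ε / 4 * ell μ t := by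
    filter_upwards [key1.eventually (gt_mem_nhds (by linarith : (0:ℝ) < ε / 4)), hellpos]
      with t h hp
    rw [div_lt_iff₀ hp] at h; linarith
  obtain ⟨M, hM⟩ := eventually_atTop.mp hev
  set M₀ : ℝ := max M 0 with hM₀
  have hM₀0 : 0 ≤ M₀ := le_max_right _ _
  have hxell : Tendsto (fun x => x * ell μ x) atTop atTop := tendsto_id.atTop_mul_atTop₀ helltop
  filter_upwards [eventually_ge_atTop M₀, hellpos, eventually_gt_atTop (0:ℝ),
    hxell.eventually_ge_atTop (M₀ * M₀ * (4 / ε))] with x hx hpos hx0 hbig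
  have hellx0 : 0 ≤ ell μ x := hpos.le
  have hJsplit : (∫ t in (0:ℝ)..x, t * tailF μ t)
      = (∫ t in (0:ℝ)..M₀, t * tailF μ t) + ∫ t in M₀..x, t * tailF μ t :=
    (intervalIntegral.integral_add_adjacent_intervals (hii 0 M₀) (hii M₀ x)).symm
  have hJ1 : (∫ t in (0:ℝ)..M₀, t * tailF μ t) ≤ M₀ * M₀ := by
    calc (∫ t in (0:ℝ)..M₀, t * tailF μ t) ≤ ∫ t in (0:ℝ)..M₀, M₀ := by
          apply intervalIntegral.integral_mono_on hM₀0 (hii 0 M₀) intervalIntegrable_const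
          intro t ht
          calc t * tailF μ t ≤ t * 1 := mul_le_mul_of_nonneg_left (h1 t) ht.1
            _ ≤ M₀ := by simpa using ht.2
      _ = M₀ * M₀ := by simp [mul_comm]
  have hJ2 : (∫ t in M₀..x, t * tailF μ t) ≤ ε / 4 * (x * ell μ x) := by
    calc (∫ t in M₀..x, t * tailF μ t) ≤ ∫ t in M₀..x, ε / 4 * ell μ t := by
          apply intervalIntegral.integral_mono_on hx (hii M₀ x) ((hellii M₀ x).const_mul _)
          intro t ht
          exact hM t (le_trans (le_max_left _ _) ht.1)
      _ ≤ ∫ t in M₀..x, ε / 4 * ell μ x := by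
          apply intervalIntegral.integral_mono_on hx ((hellii M₀ x).const_mul _)
            intervalIntegrable_const
          intro t ht
          exact mul_le_mul_of_nonneg_left (hellmono ht.2) (by linarith)
      _ = ε / 4 * ((x - M₀) * ell μ x) := by
          rw [intervalIntegral.integral_const]; ring_nf
      _ ≤ ε / 4 * (x * ell μ x) := by
          apply mul_le_mul_of_nonneg_left ?_ (by linarith)
          apply mul_le_mul_of_nonneg_right ?_ hellx0
          linarith
  have hJnn : 0 ≤ ∫ t in (0:ℝ)..x, t * tailF μ t := by
    apply intervalIntegral.integral_nonneg (by linarith)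
    intro t ht
    exact mul_nonneg ht.1 (h0 t)
  have hden : 0 < x * ell μ x := mul_pos hx0 hpos
  have hJM : M₀ * M₀ ≤ ε / 4 * (x * ell μ x) := by
    calc M₀ * M₀ = M₀ * M₀ * (4 / ε) * (ε / 4) := by field_simp
      _ ≤ (x * ell μ x) * (ε / 4) := mul_le_mul_of_nonneg_right hbig (by positivity)
      _ = ε / 4 * (x * ell μ x) := by ring
  rw [Real.dist_eq, sub_zero, abs_of_nonneg (div_nonneg hJnn hden.le), div_lt_iff₀ hden]
  calc (∫ t in (0:ℝ)..x, t * tailF μ t) ≤ M₀ * M₀ + ε / 4 * (x * ell μ x) := by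
        rw [hJsplit]; exact add_le_add hJ1 hJ2
    _ ≤ ε / 2 * (x * ell μ x) := by linarith
    _ < ε * (x * ell μ x) := by nlinarith

lemma aux_exp_bound (x : ℝ) : ‖Complex.exp (Complex.I * x) - 1‖ ≤ |x| := by
  have h : Complex.exp (Complex.I * x) - 1
      = (Real.cos x - 1 : ℝ) + (Real.sin x : ℝ) * Complex.I := by
    rw [mul_comm, Complex.exp_mul_I]
    simp [Complex.ext_iff, Complex.cos_ofReal_re, Complex.sin_ofReal_re]
  rw [h]
  rw [Complex.norm_def, Complex.normSq_add_mul_I]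
  have h2 : (Real.cos x - 1)^2 + (Real.sin x)^2 = 2 - 2 * Real.cos x := by
    have := Real.sin_sq_add_cos_sq x; nlinarith
  rw [h2]
  have h3 : 2 - 2 * Real.cos x = 4 * (Real.sin (x/2))^2 := by
    have hc := Real.cos_sq (x/2)
    rw [show 2*(x/2) = x by ring] at hc
    nlinarith [Real.sin_sq_add_cos_sq (x/2)]
  rw [h3]
  have h4 : |Real.sin (x/2)| ≤ |x/2| := Real.abs_sin_le_abs
  calc Real.sqrt (4 * Real.sin (x/2)^2) = 2 * |Real.sin (x/2)| := by
        rw [show (4:ℝ) * Real.sin (x/2)^2 = (2*|Real.sin (x/2)|)^2 by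
          rw [mul_pow, _root_.sq_abs]; ring]
        exact Real.sqrt_sq (by positivity)
    _ ≤ 2 * |x/2| := by linarith
    _ = |x| := by rw [abs_div]; simp; ring

lemma aux_norm_exp (θ r : ℝ) : ‖Complex.exp (Complex.I * θ * r)‖ = 1 := by
  rw [Complex.norm_exp]
  simp [Complex.mul_re]

lemma aux_fubini_id (θ B : ℝ) (hθ : θ ≠ 0) (hB : 0 ≤ B)
    (hae : ∀ᵐ x ∂μ, 0 ≤ x) :
    ∫ x, Complex.exp (Complex.I * θ * min x B) ∂μ - 1
      = Complex.I * θ * ∫ t in (0:ℝ)..B, Complex.exp (Complex.I * θ * t) * (tailF μ t : ℂ) := by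
  classical
  set g : ℝ → ℂ := fun t => Complex.I * θ * Complex.exp (Complex.I * θ * t) with hg
  set S : Set (ℝ × ℝ) := {p | p.2 ∈ Set.Ico (0:ℝ) B ∧ p.2 < p.1} with hS
  have hSmeas : MeasurableSet S := by
    apply MeasurableSet.inter
    · exact measurable_snd measurableSet_Ico
    · exact measurableSet_lt measurable_snd measurable_fst
  set F : ℝ × ℝ → ℂ := S.indicator (fun p => g p.2) with hF
  have hgc : Continuous g := by continuity
  have hFmeas : AEStronglyMeasurable F (μ.prod volume) :=
    ((hgc.measurable.comp measurable_snd).indicator hSmeas).aestronglyMeasurable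
  have hgnorm : ∀ t : ℝ, ‖g t‖ = |θ| := by
    intro t
    rw [hg]
    simp only [norm_mul, Complex.norm_I, one_mul, Complex.norm_real]
    rw [Complex.norm_exp]
    simp [Complex.mul_re]
  have hFint : Integrable F (μ.prod volume) := by
    refine Integrable.mono' (g := fun p => (Set.univ ×ˢ Set.Ico (0:ℝ) B).indicator (fun _ => |θ|) p)
      ?_ hFmeas ?_
    · rw [integrable_indicator_iff (MeasurableSet.univ.prod measurableSet_Ico)]
      refine integrableOn_const ?_
      rw [Measure.prod_prod]
      simpa [Real.volume_Ico, measure_univ] using ENNReal.ofReal_ne_top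
    · filter_upwards with p
      rw [hF]
      by_cases hp : p ∈ S
      · rw [Set.indicator_of_mem hp, hgnorm]
        rw [Set.indicator_of_mem (by exact ⟨trivial, hp.1⟩)]
      · rw [Set.indicator_of_notMem hp]
        simp only [norm_zero]
        exact Set.indicator_nonneg (fun _ _ => abs_nonneg θ) _
  -- inner integral in t for fixed x ≥ 0
  have hinner : ∀ x : ℝ, 0 ≤ x →
      (∫ t, F (x, t)) = Complex.exp (Complex.I * θ * min x B) - 1 := by
    intro x hx
    have h1 : (fun t => F (x, t)) = (Set.Ico (0:ℝ) (min x B)).indicator g := by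
      funext t
      rw [hF]
      by_cases ht : t ∈ Set.Ico (0:ℝ) (min x B)
      · rw [Set.indicator_of_mem ht,
          Set.indicator_of_mem (by exact ⟨⟨ht.1, lt_of_lt_of_le ht.2 (min_le_right _ _)⟩,
            lt_of_lt_of_le ht.2 (min_le_left _ _)⟩)]
      · rw [Set.indicator_of_notMem ht, Set.indicator_of_notMem ?_]
        intro hmem
        exact ht ⟨hmem.1.1, lt_min hmem.2 hmem.1.2⟩
    rw [h1, integral_indicator measurableSet_Ico]
    have hmin : (0:ℝ) ≤ min x B := le_min hx hB
    rw [MeasureTheory.integral_Ico_eq_integral_Ioo, ← MeasureTheory.integral_Ioc_eq_integral_Ioo,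
      ← intervalIntegral.integral_of_le hmin]
    have : ∫ t in (0:ℝ)..(min x B), g t
        = ∫ t in (0:ℝ)..(min x B), Complex.I * θ * Complex.exp ((Complex.I * θ) * t) := by
      apply intervalIntegral.integral_congr; intro t _; rw [hg]
    have hIθ : (Complex.I * (θ:ℂ)) ≠ 0 := by simp [Complex.ext_iff, hθ]
    rw [this, intervalIntegral.integral_const_mul, integral_exp_mul_complex hIθ]
    rw [mul_div_assoc']
    rw [mul_comm, mul_div_assoc, div_self hIθ, mul_one]
    simp [mul_assoc]
  have hexpint : Integrable (fun x => Complex.exp (Complex.I * θ * min x B)) μ := by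
    refine Integrable.mono' (integrable_const 1) ?_ ?_
    · apply Continuous.aestronglyMeasurable
      continuity
    · filter_upwards with x
      rw [Complex.norm_exp]
      simp [Complex.mul_re]
  have hswap : (∫ x, (∫ t, F (x, t)) ∂μ) = ∫ t, (∫ x, F (x, t) ∂μ) :=
    integral_integral_swap (f := fun x t => F (x, t)) hFint
  have hLHS : (∫ x, (∫ t, F (x, t)) ∂μ) = (∫ x, Complex.exp (Complex.I * θ * min x B) ∂μ) - 1 := by
    have : (∫ x, (∫ t, F (x, t)) ∂μ)
        = ∫ x, (Complex.exp (Complex.I * θ * min x B) - 1) ∂μ := by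
      apply integral_congr_ae
      filter_upwards [hae] with x hx
      exact hinner x hx
    rw [this, integral_sub hexpint (integrable_const 1), integral_const]
    simp
  have houter : ∀ t : ℝ, (∫ x, F (x, t) ∂μ)
      = (Set.Ico (0:ℝ) B).indicator (fun t => (tailF μ t : ℝ) • g t) t := by
    intro t
    by_cases ht : t ∈ Set.Ico (0:ℝ) B
    · have h2 : (fun x => F (x, t)) = (Set.Ioi t).indicator (fun _ => g t) := by
        funext x
        rw [hF]
        by_cases hx : t < x
        · rw [Set.indicator_of_mem (by exact ⟨ht, hx⟩),
            Set.indicator_of_mem (show x ∈ Set.Ioi t from hx)]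
        · rw [Set.indicator_of_notMem (fun hmem => hx hmem.2),
            Set.indicator_of_notMem (show x ∉ Set.Ioi t from hx)]
      rw [h2, integral_indicator measurableSet_Ioi, setIntegral_const,
        Set.indicator_of_mem ht]
      rfl
    · have h2 : (fun x => F (x, t)) = fun _ => (0:ℂ) := by
        funext x
        rw [hF, Set.indicator_of_notMem (fun hmem => ht hmem.1)]
      rw [h2, integral_const, Set.indicator_of_notMem ht]
      simp
  have hRHS : (∫ t, ∫ x, F (x, t) ∂μ)
      = Complex.I * θ * ∫ t in (0:ℝ)..B, Complex.exp (Complex.I * θ * t) * (tailF μ t : ℂ) := by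
    rw [integral_congr_ae (Filter.Eventually.of_forall houter),
      integral_indicator measurableSet_Ico,
      MeasureTheory.integral_Ico_eq_integral_Ioo, ← MeasureTheory.integral_Ioc_eq_integral_Ioo,
      ← intervalIntegral.integral_of_le hB, ← intervalIntegral.integral_const_mul]
    apply intervalIntegral.integral_congr
    intro t _
    simp only [hg, Complex.real_smul]
    ring
  rw [← hLHS, hswap, hRHS]

lemma aux_trunc (θ B : ℝ) (hae : ∀ᵐ x ∂μ, 0 ≤ x) :
    ‖(∫ x, Complex.exp (Complex.I * θ * min x B) ∂μ) - charF μ θ‖ ≤ 2 * tailF μ B := by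
  have hexpint : Integrable (fun x => Complex.exp (Complex.I * θ * min x B)) μ := by
    refine Integrable.mono' (integrable_const 1) ?_ ?_
    · apply Continuous.aestronglyMeasurable; continuity
    · filter_upwards with x; rw [aux_norm_exp]
  have hexpint2 : Integrable (fun x : ℝ => Complex.exp (Complex.I * θ * x)) μ := by
    refine Integrable.mono' (integrable_const 1) ?_ ?_
    · apply Continuous.aestronglyMeasurable; continuity
    · filter_upwards with x; rw [aux_norm_exp]
  rw [charF, ← integral_sub hexpint hexpint2]
  calc ‖∫ x, (Complex.exp (Complex.I * θ * min x B) - Complex.exp (Complex.I * θ * x)) ∂μ‖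
      ≤ ∫ x, ‖Complex.exp (Complex.I * θ * min x B) - Complex.exp (Complex.I * θ * x)‖ ∂μ :=
        norm_integral_le_integral_norm _
    _ ≤ ∫ x, (Set.Ioi B).indicator (fun _ => (2:ℝ)) x ∂μ := by
        apply integral_mono_ae (hexpint.sub hexpint2).norm
        · rw [integrable_indicator_iff measurableSet_Ioi]
          exact integrableOn_const (measure_lt_top μ _).ne
        · filter_upwards [hae] with x hx
          simp only [Pi.sub_apply]
          by_cases hxB : x ≤ B
          · rw [min_eq_left hxB, sub_self, norm_zero]
            exact Set.indicator_nonneg (by norm_num) x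
          · rw [Set.indicator_of_mem (show x ∈ Set.Ioi B from lt_of_not_ge hxB)]
            calc ‖_ - _‖ ≤ ‖Complex.exp (Complex.I * θ * min x B)‖
                  + ‖Complex.exp (Complex.I * θ * x)‖ := norm_sub_le _ _
              _ = 2 := by rw [aux_norm_exp, aux_norm_exp]; norm_num
    _ = 2 * tailF μ B := by
        rw [integral_indicator_const _ measurableSet_Ioi, tailF, smul_eq_mul, mul_comm]; rfl

end StmtAux

section StmtMain

set_option linter.unusedSectionVars false

variable (μ : Measure ℝ) [IsProbabilityMeasure μ]

lemma aux_ae_nonneg (hnn : μ (Set.Iio 0) = 0) : ∀ᵐ x ∂μ, 0 ≤ x := by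
  rw [ae_iff]
  convert hnn using 2
  ext x
  simp [not_le]

lemma aux_main_pos (hnn : μ (Set.Iio 0) = 0)
    (hmean : ∫⁻ x, ENNReal.ofReal |x| ∂μ = ⊤)
    (hsv : SlowlyVarying (ell μ)) :
    Tendsto (fun θ : ℝ => (1 - charF μ θ) / (-Complex.I * θ * (ell μ (1 / θ) : ℝ)))
      (𝓝[>] 0) (𝓝 1) := by
  have hae := aux_ae_nonneg μ hnn
  have helltop := aux_ell_atTop μ hnn hmean
  have key1 := aux_key1 μ hsv
  have key2 := aux_key2 μ hsv helltop
  have hinv : Tendsto (fun θ : ℝ => 1 / θ) (𝓝[>] 0) atTop := by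
    simpa [one_div] using tendsto_inv_nhdsGT_zero
  set b : ℝ → ℝ := fun B =>
    2 * (B * tailF μ B / ell μ B) + (∫ t in (0:ℝ)..B, t * tailF μ t) / (B * ell μ B) with hbdef
  have hb : Tendsto b atTop (𝓝 0) := by
    have := (key1.const_mul 2).add key2
    simpa [hbdef] using this
  rw [tendsto_iff_norm_sub_tendsto_zero]
  apply squeeze_zero' (Filter.Eventually.of_forall fun θ => norm_nonneg _) ?_ (hb.comp hinv)
  filter_upwards [self_mem_nhdsWithin, hinv.eventually hsv.1] with θ hθmem hL
  have hθ0 : (0:ℝ) < θ := hθmem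
  set B : ℝ := 1 / θ with hBdef
  have hB0 : (0:ℝ) < B := by positivity
  set L : ℝ := ell μ B with hLdef
  have hLpos : (0:ℝ) < L := hL
  have hden : (-Complex.I * θ * (L:ℂ)) ≠ 0 := by
    apply mul_ne_zero (mul_ne_zero (neg_ne_zero.2 Complex.I_ne_zero) ?_) ?_
    · exact_mod_cast Complex.ofReal_ne_zero.mpr hθ0.ne'
    · exact_mod_cast Complex.ofReal_ne_zero.mpr hLpos.ne'
  have hnormden : ‖-Complex.I * (θ:ℂ) * (L:ℂ)‖ = θ * L := by
    simp [norm_mul, Complex.norm_real, abs_of_pos hθ0, abs_of_pos hLpos, Real.norm_eq_abs]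
  set K : ℂ := ∫ t in (0:ℝ)..B, Complex.exp (Complex.I * θ * t) * (tailF μ t : ℂ) with hKdef
  have hfub := aux_fubini_id μ θ B hθ0.ne' hB0.le hae
  set J : ℝ := ∫ t in (0:ℝ)..B, t * tailF μ t with hJdef
  have hJnn : 0 ≤ J := by
    rw [hJdef]
    exact intervalIntegral.integral_nonneg hB0.le fun t ht =>
      mul_nonneg ht.1 (aux_tailF_nonneg μ t)
  -- ‖K - L‖ ≤ θ * J
  have hKL : ‖K - (L:ℂ)‖ ≤ θ * J := by
    have hGii : IntervalIntegrable (fun t : ℝ => ((tailF μ t : ℝ) : ℂ)) volume 0 B := by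
      constructor <;>
      · refine Integrable.mono' (integrable_const 1)
          ((Complex.measurable_ofReal.comp (aux_tailF_meas μ)).aestronglyMeasurable.restrict) ?_
        filter_upwards with t
        simpa [Complex.norm_real, Real.norm_eq_abs,
          abs_of_nonneg (aux_tailF_nonneg μ t)] using aux_tailF_le_one μ t
    have heGii : IntervalIntegrable
        (fun t : ℝ => Complex.exp (Complex.I * θ * t) * (tailF μ t : ℂ)) volume 0 B := by
      constructor <;>
      · refine Integrable.mono' (integrable_const 1)
          (((Complex.continuous_exp.comp (by continuity)).measurable.mul
            (Complex.measurable_ofReal.comp (aux_tailF_meas μ))).aestronglyMeasurable.restrict) ?_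
        filter_upwards with t
        rw [norm_mul, aux_norm_exp, one_mul]
        simpa [Complex.norm_real, Real.norm_eq_abs,
          abs_of_nonneg (aux_tailF_nonneg μ t)] using aux_tailF_le_one μ t
    have hLint : (L:ℂ) = ∫ t in (0:ℝ)..B, ((tailF μ t : ℝ) : ℂ) := by
      rw [hLdef, ell, intervalIntegral.integral_ofReal]
    rw [hKdef, hLint, ← intervalIntegral.integral_sub heGii hGii]
    have hcong : ∀ t : ℝ,
        Complex.exp (Complex.I * θ * t) * (tailF μ t : ℂ) - (tailF μ t : ℂ)
          = (Complex.exp (Complex.I * θ * t) - 1) * (tailF μ t : ℂ) := fun t => by ring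
    calc ‖∫ t in (0:ℝ)..B, (Complex.exp (Complex.I * θ * t) * (tailF μ t : ℂ) - (tailF μ t : ℂ))‖
        ≤ |∫ t in (0:ℝ)..B, θ * (t * tailF μ t)| := by
          apply intervalIntegral.norm_integral_le_abs_of_norm_le ?_ ((aux_tG_ii μ 0 B).const_mul θ)
          rw [uIoc_of_le hB0.le]
          rw [ae_restrict_iff' measurableSet_Ioc]
          filter_upwards with t ht
          rw [hcong t, norm_mul]
          have h1 : ‖Complex.exp (Complex.I * θ * t) - 1‖ ≤ θ * t := by
            have := aux_exp_bound (θ * t)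
            rw [abs_of_nonneg (by nlinarith [ht.1] : (0:ℝ) ≤ θ * t)] at this
            calc ‖Complex.exp (Complex.I * θ * t) - 1‖
                = ‖Complex.exp (Complex.I * (θ * t : ℝ)) - 1‖ := by
                  rw [Complex.ofReal_mul]; ring_nf
              _ ≤ θ * t := this
          have h2 : ‖((tailF μ t : ℝ) : ℂ)‖ = tailF μ t := by
            simp [Complex.norm_real, Real.norm_eq_abs, abs_of_nonneg (aux_tailF_nonneg μ t)]
          rw [h2]
          calc ‖Complex.exp (Complex.I * θ * t) - 1‖ * tailF μ t
              ≤ (θ * t) * tailF μ t :=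
                mul_le_mul_of_nonneg_right h1 (aux_tailF_nonneg μ t)
            _ = θ * (t * tailF μ t) := by ring
      _ = θ * J := by
          rw [intervalIntegral.integral_const_mul, abs_of_nonneg (by positivity)]
  -- numerator bound
  have hnum : ‖(1 - charF μ θ) - (-Complex.I * θ * (L:ℂ))‖ ≤ 2 * tailF μ B + θ * (θ * J) := by
    have hsplit : (1 - charF μ θ) - (-Complex.I * θ * (L:ℂ))
        = ((∫ x, Complex.exp (Complex.I * θ * min x B) ∂μ) - charF μ θ)
          - (Complex.I * θ) * (K - L) - ((∫ x, Complex.exp (Complex.I * θ * min x B) ∂μ) - 1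
            - Complex.I * θ * K) := by
      ring
    rw [hsplit, hfub]
    have h0 : (Complex.I * ↑θ * ∫ t in (0:ℝ)..B, Complex.exp (Complex.I * ↑θ * ↑t) * (tailF μ t : ℂ))
        - Complex.I * ↑θ * K = 0 := by
      rw [hKdef]; exact sub_self _
    rw [h0, sub_zero]
    have hIθ : ‖(Complex.I * θ : ℂ)‖ = θ := by
      simp [norm_mul, Complex.norm_real, Real.norm_eq_abs, abs_of_pos hθ0]
    calc ‖((∫ x, Complex.exp (Complex.I * θ * min x B) ∂μ) - charF μ θ)
          - (Complex.I * θ) * (K - L)‖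
        ≤ ‖((∫ x, Complex.exp (Complex.I * θ * min x B) ∂μ) - charF μ θ)‖
          + ‖(Complex.I * θ : ℂ) * (K - L)‖ := norm_sub_le _ _
      _ ≤ 2 * tailF μ B + θ * (θ * J) := by
          apply add_le_add (aux_trunc μ θ B hae)
          rw [norm_mul, hIθ]
          exact mul_le_mul_of_nonneg_left hKL hθ0.le
  -- final computation
  have hgoal : ‖(1 - charF μ θ) / (-Complex.I * θ * (L:ℂ)) - 1‖
      ≤ (2 * tailF μ B + θ * (θ * J)) / (θ * L) := by
    rw [div_sub_one hden, norm_div, hnormden]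
    exact div_le_div_of_nonneg_right hnum (by positivity)
  refine le_trans hgoal (le_of_eq ?_)
  show _ = b B
  rw [hbdef]
  have hθB : θ = 1 / B := by rw [hBdef, one_div_one_div]
  rw [hθB]
  simp only [← hLdef, ← hJdef]
  field_simp

end StmtMain

/-- `1 - φ(θ) = -iθ ℓ(1/|θ|)(1+o(1))` as `θ → 0`; in particular
`Re[1-φ(θ)] = o(θ ℓ(1/θ))` and `Im[1-φ(θ)] ∼ -θ ℓ(1/θ)` as `θ → 0+`. -/
theorem stmt4 (μ : Measure ℝ) [IsProbabilityMeasure μ]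
    (hnn : μ (Set.Iio 0) = 0)
    (hmean : ∫⁻ x, ENNReal.ofReal |x| ∂μ = ⊤)
    (hsv : SlowlyVarying (ell μ)) :
    Tendsto (fun θ : ℝ =>
        (1 - charF μ θ) / (-Complex.I * θ * (ell μ (1 / |θ|) : ℝ)))
      (𝓝[≠] 0) (𝓝 1) ∧
    ((fun θ : ℝ => (1 - charF μ θ).re) =o[𝓝[>] (0:ℝ)]
      fun θ => θ * ell μ (1 / θ)) ∧
    Tendsto (fun θ : ℝ => (1 - charF μ θ).im / (-(θ * ell μ (1 / θ))))
      (𝓝[>] (0:ℝ)) (𝓝 1) := by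
  have hQ := aux_main_pos μ hnn hmean hsv
  set R : ℝ → ℂ := fun θ => (1 - charF μ θ) / (-Complex.I * θ * (ell μ (1 / |θ|) : ℝ)) with hRdef
  have hRpos : Tendsto R (𝓝[>] 0) (𝓝 1) := by
    apply Tendsto.congr' ?_ hQ
    filter_upwards [self_mem_nhdsWithin] with θ hθ
    rw [hRdef]
    simp only [abs_of_pos (show (0:ℝ) < θ from hθ)]
  have hchar : ∀ θ : ℝ, charF μ (-θ) = (starRingEnd ℂ) (charF μ θ) := by
    intro θ
    rw [charF, charF, ← integral_conj]
    congr 1; funext x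
    rw [← Complex.exp_conj]
    congr 1
    rw [map_mul, map_mul, Complex.conj_I, Complex.conj_ofReal, Complex.conj_ofReal]
    push_cast
    ring
  have hRid : ∀ θ : ℝ, R θ = (starRingEnd ℂ) (R (-θ)) := by
    intro θ
    rw [hRdef]
    simp only [abs_neg]
    rw [map_div₀, map_sub, map_one, hchar θ]
    rw [Complex.conj_conj]
    congr 1
    rw [map_mul, map_mul, map_neg, Complex.conj_I, Complex.conj_ofReal, Complex.conj_ofReal]
    push_cast
    ring
  have hneg : Tendsto (fun θ : ℝ => -θ) (𝓝[<] (0:ℝ)) (𝓝[>] (0:ℝ)) := by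
    apply tendsto_nhdsWithin_of_tendsto_nhds_of_eventually_within
    · have := (continuous_neg.tendsto (0:ℝ)).mono_left (nhdsWithin_le_nhds (s := Set.Iio 0))
      simpa using this
    · filter_upwards [self_mem_nhdsWithin] with θ hθ
      simpa using (show θ < 0 from hθ)
  have hRneg : Tendsto R (𝓝[<] (0:ℝ)) (𝓝 1) := by
    have h1 : Tendsto (fun θ : ℝ => (starRingEnd ℂ) (R (-θ))) (𝓝[<] (0:ℝ)) (𝓝 1) := by
      have := (Complex.continuous_conj.tendsto (1:ℂ)).comp (hRpos.comp hneg)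
      simpa [Function.comp_def] using this
    exact h1.congr (fun θ => (hRid θ).symm)
  have hR : Tendsto R (𝓝[≠] 0) (𝓝 1) := by
    rw [← nhdsLT_sup_nhdsGT (0:ℝ)]
    exact hRneg.sup hRpos
  refine ⟨hR, ?_, ?_⟩
  · -- real part little-o
    have him : Tendsto (fun θ : ℝ => ((1 - charF μ θ) /
        (-Complex.I * θ * (ell μ (1 / θ) : ℝ))).im) (𝓝[>] (0:ℝ)) (𝓝 0) := by
      have := (Complex.continuous_im.tendsto (1:ℂ)).comp hQ
      simpa [Function.comp_def] using this
    rw [isLittleO_iff]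
    intro c hc
    have hev : ∀ᶠ θ : ℝ in 𝓝[>] (0:ℝ), |((1 - charF μ θ) /
        (-Complex.I * θ * (ell μ (1 / θ) : ℝ))).im| ≤ c := by
      filter_upwards [Metric.tendsto_nhds.mp him c hc] with θ h
      rw [Real.dist_eq, sub_zero] at h
      exact h.le
    have hinv : Tendsto (fun θ : ℝ => 1 / θ) (𝓝[>] 0) atTop := by
      simpa [one_div] using tendsto_inv_nhdsGT_zero
    filter_upwards [self_mem_nhdsWithin, hinv.eventually hsv.1, hev] with θ hθ hL habs
    have hθ0 : (0:ℝ) < θ := hθ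
    have hden : (-Complex.I * (θ:ℂ) * ((ell μ (1 / θ) : ℝ) : ℂ)) ≠ 0 := by
      apply mul_ne_zero (mul_ne_zero (neg_ne_zero.2 Complex.I_ne_zero) ?_) ?_
      · exact_mod_cast Complex.ofReal_ne_zero.mpr hθ0.ne'
      · exact_mod_cast Complex.ofReal_ne_zero.mpr hL.ne'
    have hid : (1 - charF μ θ) = ((1 - charF μ θ) /
        (-Complex.I * θ * (ell μ (1 / θ) : ℝ))) * (-Complex.I * θ * (ell μ (1 / θ) : ℝ)) := by
      rw [div_mul_cancel₀ _ hden]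
    set z : ℂ := (1 - charF μ θ) / (-Complex.I * θ * (ell μ (1 / θ) : ℝ)) with hz
    have hre : (1 - charF μ θ).re = (θ * ell μ (1 / θ)) * z.im := by
      rw [hid, Complex.mul_re]
      simp [Complex.mul_re, Complex.mul_im]
      ring
    rw [hre, Real.norm_eq_abs, Real.norm_eq_abs, abs_mul]
    calc |θ * ell μ (1 / θ)| * |z.im| ≤ |θ * ell μ (1 / θ)| * c :=
          mul_le_mul_of_nonneg_left habs (abs_nonneg _)
      _ = c * |θ * ell μ (1 / θ)| := by ring
  · -- imaginary part
    have hre1 : Tendsto (fun θ : ℝ => ((1 - charF μ θ) /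
        (-Complex.I * θ * (ell μ (1 / θ) : ℝ))).re) (𝓝[>] (0:ℝ)) (𝓝 1) := by
      have := (Complex.continuous_re.tendsto (1:ℂ)).comp hQ
      simpa [Function.comp_def] using this
    apply Tendsto.congr' ?_ hre1
    have hinv : Tendsto (fun θ : ℝ => 1 / θ) (𝓝[>] 0) atTop := by
      simpa [one_div] using tendsto_inv_nhdsGT_zero
    filter_upwards [self_mem_nhdsWithin, hinv.eventually hsv.1] with θ hθ hL
    have hθ0 : (0:ℝ) < θ := hθ
    have hden : (-Complex.I * (θ:ℂ) * ((ell μ (1 / θ) : ℝ) : ℂ)) ≠ 0 := by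
      apply mul_ne_zero (mul_ne_zero (neg_ne_zero.2 Complex.I_ne_zero) ?_) ?_
      · exact_mod_cast Complex.ofReal_ne_zero.mpr hθ0.ne'
      · exact_mod_cast Complex.ofReal_ne_zero.mpr hL.ne'
    have hid : (1 - charF μ θ) = ((1 - charF μ θ) /
        (-Complex.I * θ * (ell μ (1 / θ) : ℝ))) * (-Complex.I * θ * (ell μ (1 / θ) : ℝ)) := by
      rw [div_mul_cancel₀ _ hden]
    set z : ℂ := (1 - charF μ θ) / (-Complex.I * θ * (ell μ (1 / θ) : ℝ)) with hz
    have him2 : (1 - charF μ θ).im = -(θ * ell μ (1 / θ)) * z.re := by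
      rw [hid, Complex.mul_im]
      simp [Complex.mul_re, Complex.mul_im]
      ring
    rw [him2]
    rw [mul_comm, mul_div_assoc, div_self (by
      simp only [ne_eq, neg_eq_zero]
      exact (mul_pos hθ0 hL).ne'), mul_one]
end

section
/- Let F be a distribution on ℝ with E|X| = ∞ and set H(x) = 1 - F(x) + F(-x-0), K(x) = 1 - F(x) - F(-x-0), A(x) = ∫₀ˣ K(t) dt. If A(x)/(x H(x)) → ∞ as x → ∞ (condition (Ha)), then A is eventually positive and slowly varying at infinity. -/
open MeasureTheory Filter Set Asymptotics Topology

/-- Two-sided tail `H(x) = P[|X| > x] = 1 - F(x) + F(-x-0)`. -/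
noncomputable def Hf (μ : Measure ℝ) (x : ℝ) : ℝ := (μ {y : ℝ | x < |y|}).toReal

/-- `K(x) = P[X > x] - P[X < -x] = 1 - F(x) - F(-x-0)`. -/
noncomputable def Kf (μ : Measure ℝ) (x : ℝ) : ℝ :=
  (μ (Set.Ioi x)).toReal - (μ (Set.Iio (-x))).toReal

/-- `A(x) = ∫₀ˣ K(t) dt`. -/
noncomputable def Af (μ : Measure ℝ) (x : ℝ) : ℝ := ∫ t in (0:ℝ)..x, Kf μ t

/-- `ℓ(x) = ∫₀ˣ H(t) dt`. -/
noncomputable def ellH (μ : Measure ℝ) (x : ℝ) : ℝ := ∫ t in (0:ℝ)..x, Hf μ t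

/-- `m(x)`, defined by `1/m(x) = ∫ₓ^∞ H(t)/A²(t) dt`. -/
noncomputable def mF (μ : Measure ℝ) (x : ℝ) : ℝ :=
  (∫ t in Set.Ioi x, Hf μ t / (Af μ t) ^ 2)⁻¹

/-- `r₊(x) = ∫ₓ^∞ (1-F(t))/A²(t) dt`. -/
noncomputable def rPlus (μ : Measure ℝ) (x : ℝ) : ℝ :=
  ∫ t in Set.Ioi x, tailF μ t / (Af μ t) ^ 2

/-- `r₋(x) = ∫ₓ^∞ F(-t)/A²(t) dt`. -/
noncomputable def rMinus (μ : Measure ℝ) (x : ℝ) : ℝ :=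
  ∫ t in Set.Ioi x, (μ (Set.Iio (-t))).toReal / (Af μ t) ^ 2

/-- Condition (Ha): `A(x)/(x H(x)) → ∞`, i.e. positive relative stability. -/
def HaCond (μ : Measure ℝ) : Prop :=
  Tendsto (fun x => Af μ x / (x * Hf μ x)) atTop atTop

/-- Condition (Hb): `∫_{x₀}^∞ H(x)/A²(x) dx < ∞` for some `x₀ > 0`
with `A` positive on `[x₀, ∞)`. -/
def HbCond (μ : Measure ℝ) : Prop :=
  ∃ x₀ : ℝ, 0 < x₀ ∧ (∀ x ≥ x₀, 0 < Af μ x) ∧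
    IntegrableOn (fun x => Hf μ x / (Af μ x) ^ 2) (Set.Ioi x₀)

/-- `X` is arithmetic: `X/h ∈ ℤ` almost surely for some `h > 0`. -/
def IsArith (μ : Measure ℝ) : Prop :=
  ∃ h : ℝ, 0 < h ∧ μ {x : ℝ | ∃ n : ℤ, x = n * h} = 1

section Aux

variable (μ : Measure ℝ) [IsProbabilityMeasure μ]

lemma Hf_antitone : Antitone (Hf μ) := fun a b hab =>
  ENNReal.toReal_mono (measure_ne_top μ _)
    (measure_mono (fun y hy => lt_of_le_of_lt hab hy))

lemma Hf_pos (hmean : ∫⁻ x, ENNReal.ofReal |x| ∂μ = ⊤) (x : ℝ) : 0 < Hf μ x := by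
  by_contra h
  push_neg at h
  have h0 : Hf μ x = 0 := le_antisymm h ENNReal.toReal_nonneg
  have hfin := measure_ne_top μ {y : ℝ | x < |y|}
  have hμ : μ {y : ℝ | x < |y|} = 0 := by
    rcases (ENNReal.toReal_eq_zero_iff _).mp h0 with h' | h'
    · exact h'
    · exact absurd h' hfin
  have hae : ∀ᵐ y ∂μ, |y| ≤ x := by
    have : ∀ᵐ y ∂μ, ¬ (x < |y|) := by
      rw [ae_iff]; simpa using hμ
    filter_upwards [this] with y hy; exact not_lt.mp hy
  have hle : ∫⁻ y, ENNReal.ofReal |y| ∂μ ≤ ∫⁻ _, ENNReal.ofReal x ∂μ := by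
    apply lintegral_mono_ae
    filter_upwards [hae] with y hy
    exact ENNReal.ofReal_le_ofReal hy
  rw [hmean, lintegral_const, measure_univ, mul_one] at hle
  exact ENNReal.ofReal_ne_top (top_le_iff.mp hle)

lemma Kf_measurable : Measurable (Kf μ) := by
  have h1 : Antitone (fun x : ℝ => (μ (Set.Ioi x)).toReal) := fun a b hab =>
    ENNReal.toReal_mono (measure_ne_top μ _) (measure_mono (Set.Ioi_subset_Ioi hab))
  have h2 : Antitone (fun x : ℝ => (μ (Set.Iio (-x))).toReal) := fun a b hab =>
    ENNReal.toReal_mono (measure_ne_top μ _) (measure_mono (Set.Iio_subset_Iio (neg_le_neg hab)))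
  exact h1.measurable.sub h2.measurable

lemma toReal_le_one (s : Set ℝ) : (μ s).toReal ≤ 1 := by
  have : (μ s).toReal ≤ (μ Set.univ).toReal :=
    ENNReal.toReal_mono (measure_ne_top μ _) (measure_mono (Set.subset_univ s))
  simpa using this

lemma abs_Kf_le_one (t : ℝ) : |Kf μ t| ≤ 1 := by
  have h1 := toReal_le_one μ (Set.Ioi t)
  have h2 := toReal_le_one μ (Set.Iio (-t))
  have h3 : (0:ℝ) ≤ (μ (Set.Ioi t)).toReal := ENNReal.toReal_nonneg
  have h4 : (0:ℝ) ≤ (μ (Set.Iio (-t))).toReal := ENNReal.toReal_nonneg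
  rw [Kf, abs_sub_le_iff]
  constructor <;> linarith

lemma abs_Kf_le_Hf (t : ℝ) (ht : 0 ≤ t) : |Kf μ t| ≤ Hf μ t := by
  have hset : {y : ℝ | t < |y|} = Set.Ioi t ∪ Set.Iio (-t) := by
    ext y
    simp only [Set.mem_setOf_eq, lt_abs, Set.mem_union, Set.mem_Ioi, Set.mem_Iio, lt_neg]
  have hdisj : Disjoint (Set.Ioi t) (Set.Iio (-t)) := by
    rw [Set.disjoint_left]
    intro y hy1 hy2
    simp only [Set.mem_Ioi] at hy1
    simp only [Set.mem_Iio] at hy2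
    linarith
  have hH : Hf μ t = (μ (Set.Ioi t)).toReal + (μ (Set.Iio (-t))).toReal := by
    rw [Hf, hset, measure_union hdisj measurableSet_Iio,
      ENNReal.toReal_add (measure_ne_top μ _) (measure_ne_top μ _)]
  have h3 : (0:ℝ) ≤ (μ (Set.Ioi t)).toReal := ENNReal.toReal_nonneg
  have h4 : (0:ℝ) ≤ (μ (Set.Iio (-t))).toReal := ENNReal.toReal_nonneg
  rw [Kf, abs_sub_le_iff, hH]
  constructor <;> linarith

lemma Kf_intervalIntegrable (a b : ℝ) : IntervalIntegrable (Kf μ) volume a b := by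
  refine (intervalIntegrable_const (c := (1:ℝ))).mono_fun
    ((Kf_measurable μ).aestronglyMeasurable) ?_
  filter_upwards with t
  simpa [Real.norm_eq_abs] using abs_Kf_le_one μ t

lemma Af_sub (a b : ℝ) : Af μ b - Af μ a = ∫ t in a..b, Kf μ t := by
  have h1 := intervalIntegral.integral_add_adjacent_intervals
    (Kf_intervalIntegrable μ 0 a) (Kf_intervalIntegrable μ a b)
  simp only [Af]
  linarith

end Aux

/-- Under (Ha), `A` is eventually positive and slowly varying at infinity. -/
theorem stmt8 (μ : Measure ℝ) [IsProbabilityMeasure μ]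
    (hmean : ∫⁻ x, ENNReal.ofReal |x| ∂μ = ⊤)
    (hHa : HaCond μ) :
    SlowlyVarying (Af μ) := by
  have hApos : ∀ᶠ x in atTop, 0 < Af μ x ∧ 0 < x * Hf μ x := by
    have h1 : ∀ᶠ x in atTop, 1 < Af μ x / (x * Hf μ x) := hHa.eventually_gt_atTop 1
    filter_upwards [h1, eventually_gt_atTop 0] with x hx hx0
    have hH : 0 < Hf μ x := Hf_pos μ hmean x
    have hxH : 0 < x * Hf μ x := mul_pos hx0 hH
    exact ⟨lt_trans hxH ((one_lt_div hxH).mp hx), hxH⟩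
  constructor
  · exact hApos.mono fun x hx => hx.1
  intro c hc
  have hratio : Tendsto (fun x => x * Hf μ x / Af μ x) atTop (𝓝 0) := by
    have h := hHa.inv_tendsto_atTop
    apply h.congr'
    filter_upwards with x
    simp only [Pi.inv_apply, inv_div]
  have hbound : ∀ᶠ x in atTop, ‖Af μ (c * x) / Af μ x - 1‖ ≤
      (c - 1) * (x * Hf μ x / Af μ x) := by
    filter_upwards [hApos, eventually_ge_atTop 0] with x hx hx0
    obtain ⟨hA, hxH⟩ := hx
    have hxc : x ≤ c * x := le_mul_of_one_le_left hx0 hc.le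
    have key : ‖∫ t in x..(c * x), Kf μ t‖ ≤ Hf μ x * |c * x - x| := by
      apply intervalIntegral.norm_integral_le_of_norm_le_const
      intro t ht
      rw [Set.uIoc_of_le hxc] at ht
      have h1 : x < t := ht.1
      calc ‖Kf μ t‖ = |Kf μ t| := Real.norm_eq_abs _
        _ ≤ Hf μ t := abs_Kf_le_Hf μ t (le_trans hx0 h1.le)
        _ ≤ Hf μ x := Hf_antitone μ h1.le
    rw [← Af_sub μ x (c * x)] at key
    have heq : Af μ (c * x) / Af μ x - 1 = (Af μ (c * x) - Af μ x) / Af μ x := by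
      field_simp
    rw [heq, Real.norm_eq_abs, abs_div, abs_of_pos hA, div_le_iff₀ hA]
    have habs : |c * x - x| = (c - 1) * x := by
      rw [abs_of_nonneg (by nlinarith)]
      ring
    calc |Af μ (c * x) - Af μ x| ≤ Hf μ x * |c * x - x| := by
          simpa [Real.norm_eq_abs] using key
      _ = (c - 1) * (x * Hf μ x) := by rw [habs]; ring
      _ = (c - 1) * (x * Hf μ x / Af μ x) * Af μ x := by
          field_simp
  have h0 : Tendsto (fun x => Af μ (c * x) / Af μ x - 1) atTop (𝓝 0) := by
    apply squeeze_zero_norm' hbound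
    have := hratio.const_mul (c - 1)
    simpa using this
  have := h0.add (tendsto_const_nhds (α := ℝ) (x := (1:ℝ)))
  simpa using this
end
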